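/- Every finite tree has a monochromatic fixed point of the majority process, and it has a non-monochromatic fixed point of the majority process if and only if it has at least two inner (non-leaf) nodes. -/

import Mathlib

/-!
Constant colorings are trivially fixed. In a connected graph a non-monochromatic fixed point has
a bichromatic edge, and each of its endpoints sees one disagreeing neighbor, so it must see an
agreeing one too: both endpoints are inner nodes. Conversely, two inner nodes of a tree yield two
adjacent inner nodes `a`, `b` (the first step of the path between them). Since `ab` is a bridge,
coloring the two sides of it differently makes `ab` the only bichromatic edge, and then every node
sees at most one disagreeing neighbor, while `a` and `b` still see an agreeing one.
-/

open SimpleGraph Finset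
open scoped Classical

variable {V : Type*}

/-- Number of neighbors of `v` with the same color as `v`. -/
noncomputable def sameCount (G : SimpleGraph V) [Fintype V] (c : V → Bool) (v : V) : ℕ :=
  ((G.neighborFinset v).filter fun u => c u = c v).card

/-- Number of neighbors of `v` with the opposite color. -/
noncomputable def diffCount (G : SimpleGraph V) [Fintype V] (c : V → Bool) (v : V) : ℕ :=
  ((G.neighborFinset v).filter fun u => c u ≠ c v).card

/-- One round of the minority process. -/
noncomputable def minStep (G : SimpleGraph V) [Fintype V] (c : V → Bool) : V → Bool :=
  fun v => if sameCount G c v ≤ diffCount G c v then c v else !c v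

/-- One round of the majority process. -/
noncomputable def majStep (G : SimpleGraph V) [Fintype V] (c : V → Bool) : V → Bool :=
  fun v => if diffCount G c v ≤ sameCount G c v then c v else !c v

/-- Number of edges of `F` incident to `v`. -/
noncomputable def incCount (F : Finset (Sym2 V)) (v : V) : ℕ :=
  (F.filter fun e => v ∈ e).card

/-- The monochromatic edges of a coloring. -/
noncomputable def monoEdges (G : SimpleGraph V) [Fintype V] (c : V → Bool) : Finset (Sym2 V) :=
  G.edgeFinset.filter fun e => ∀ x ∈ e, ∀ y ∈ e, c x = c y

/-- The multichromatic edges of a coloring. -/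
noncomputable def multiEdges (G : SimpleGraph V) [Fintype V] (c : V → Bool) : Finset (Sym2 V) :=
  G.edgeFinset.filter fun e => ∃ x ∈ e, ∃ y ∈ e, c x ≠ c y

namespace SimpleGraph

theorem Preconnected.exists_adj_ne {G : SimpleGraph V} (hG : G.Preconnected) {c : V → Bool}
    (hc : ¬ ∀ u w, c u = c w) : ∃ x y, G.Adj x y ∧ c x ≠ c y := by
  push Not at hc
  obtain ⟨u, w, huw⟩ := hc
  obtain ⟨d, -, hd, hd'⟩ :=
    (hG u w).some.exists_boundary_dart {x | c x = c u} rfl (Ne.symm huw)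
  exact ⟨d.fst, d.snd, d.adj, fun h => hd' (h.symm.trans hd)⟩

theorem IsAcyclic.exists_coloring_of_adj {G : SimpleGraph V} (hG : G.IsAcyclic) {a b : V}
    (hab : G.Adj a b) :
    ∃ c : V → Bool, c a ≠ c b ∧ ∀ x y, G.Adj x y → s(x, y) ≠ s(a, b) → c x = c y := by
  let H := G.deleteEdges {s(a, b)}
  have hbridge : ¬ H.Reachable a b := isAcyclic_iff_forall_adj_isBridge.mp hG hab
  refine ⟨fun v => decide (H.Reachable a v), by simpa using hbridge, fun x y hxy hne => ?_⟩
  have hH : H.Adj x y := by simp [H, hxy, hne]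
  simp only [decide_eq_decide]
  exact ⟨fun r => r.trans hH.reachable, fun r => r.trans hH.symm.reachable⟩

variable [Fintype V] {G : SimpleGraph V}

theorem two_le_degree_of_adj_of_adj {b u x : V} (hu : G.Adj b u) (hx : G.Adj b x) (hne : u ≠ x) :
    2 ≤ G.degree b := by
  rw [← card_neighborFinset_eq_degree]
  exact one_lt_card.mpr ⟨u, by simpa, x, by simpa, hne⟩

theorem Preconnected.exists_adj_two_le_degree (hG : G.Preconnected) {u w : V} (hne : u ≠ w)
    (hu : 2 ≤ G.degree u) (hw : 2 ≤ G.degree w) :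
    ∃ a b, G.Adj a b ∧ 2 ≤ G.degree a ∧ 2 ≤ G.degree b := by
  obtain ⟨p, hp⟩ := (hG u w).some.toPath
  cases p with
  | nil => exact absurd rfl hne
  | cons hub q =>
    refine ⟨u, _, hub, hu, ?_⟩
    cases q with
    | nil => exact hw
    | cons hbx q =>
      have hu_notMem : u ∉ (Walk.cons hbx q).support := ((Walk.cons_isPath_iff _ _).mp hp).2
      refine two_le_degree_of_adj_of_adj hub.symm hbx fun hux => hu_notMem ?_
      simp [hux]

end SimpleGraph

section

variable [Fintype V] {G : SimpleGraph V} {c : V → Bool}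

theorem sameCount_add_diffCount (G : SimpleGraph V) (c : V → Bool) (v : V) :
    sameCount G c v + diffCount G c v = G.degree v := by
  rw [sameCount, diffCount, card_filter_add_card_filter_not, card_neighborFinset_eq_degree]

theorem majStep_eq_self_iff : majStep G c = c ↔ ∀ v, diffCount G c v ≤ sameCount G c v := by
  simp only [funext_iff, majStep]
  refine forall_congr' fun v => ?_
  split_ifs with h <;> simp [h]

theorem diffCount_eq_zero {v : V} (h : ∀ u, G.Adj v u → c u = c v) : diffCount G c v = 0 := by
  simpa [diffCount, filter_eq_empty_iff] using h

theorem diffCount_le_one {v o : V} (h : ∀ u, G.Adj v u → u ≠ o → c u = c v) :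
    diffCount G c v ≤ 1 := by
  refine card_le_one.mpr fun x hx y hy => ?_
  simp only [mem_filter, mem_neighborFinset] at hx hy
  have hxo : x = o := by_contra fun hxo => hx.2 (h x hx.1 hxo)
  have hyo : y = o := by_contra fun hyo => hy.2 (h y hy.1 hyo)
  rw [hxo, hyo]

theorem diffCount_le_sameCount_of_two_le_degree {v o : V}
    (h : ∀ u, G.Adj v u → u ≠ o → c u = c v) (hv : 2 ≤ G.degree v) :
    diffCount G c v ≤ sameCount G c v := by
  have := diffCount_le_one h
  have := sameCount_add_diffCount G c v
  omega

theorem majStep_const (b : Bool) : majStep G (fun _ => b) = fun _ => b :=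
  majStep_eq_self_iff.mpr fun _ => (diffCount_eq_zero fun _ _ => rfl).trans_le (Nat.zero_le _)

theorem majStep_eq_self_of_forall_adj_of_ne {a b : V} (ha : 2 ≤ G.degree a)
    (hb : 2 ≤ G.degree b) (h : ∀ x y, G.Adj x y → s(x, y) ≠ s(a, b) → c x = c y) :
    majStep G c = c := by
  refine majStep_eq_self_iff.mpr fun v => ?_
  by_cases hva : v = a
  · subst hva
    exact diffCount_le_sameCount_of_two_le_degree (o := b)
      (fun u hu hub => (h v u hu (by simp [hub, hu.ne'])).symm) ha
  by_cases hvb : v = b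
  · subst hvb
    exact diffCount_le_sameCount_of_two_le_degree (o := a)
      (fun u hu hua => (h v u hu (by simp [hua, hu.ne'])).symm) hb
  have hv : diffCount G c v = 0 :=
    diffCount_eq_zero fun u hu => (h v u hu (by simp [hva, hvb])).symm
  omega

theorem two_le_degree_of_majStep_eq_self (hc : majStep G c = c) {x y : V} (hxy : G.Adj x y)
    (hne : c x ≠ c y) : 2 ≤ G.degree x := by
  have hdiff : 0 < diffCount G c x :=
    card_pos.mpr ⟨y, mem_filter.mpr ⟨(G.mem_neighborFinset x y).mpr hxy, hne.symm⟩⟩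
  have := majStep_eq_self_iff.mp hc x
  have := sameCount_add_diffCount G c x
  omega

end

theorem stmt6 [Fintype V] (G : SimpleGraph V) (hT : G.IsTree) :
    (∃ c : V → Bool, majStep G c = c ∧ ∀ u w : V, c u = c w) ∧
    ((∃ c : V → Bool, majStep G c = c ∧ ¬ (∀ u w : V, c u = c w)) ↔
      ∃ u w : V, u ≠ w ∧ 2 ≤ G.degree u ∧ 2 ≤ G.degree w) := by
  refine ⟨⟨fun _ => true, majStep_const true, fun _ _ => rfl⟩, ?_, ?_⟩
  · rintro ⟨c, hc, hnc⟩
    obtain ⟨x, y, hxy, hne⟩ := hT.connected.preconnected.exists_adj_ne hnc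
    exact ⟨x, y, hxy.ne, two_le_degree_of_majStep_eq_self hc hxy hne,
      two_le_degree_of_majStep_eq_self hc hxy.symm hne.symm⟩
  · rintro ⟨u, w, hne, hu, hw⟩
    obtain ⟨a, b, hab, ha, hb⟩ := hT.connected.preconnected.exists_adj_two_le_degree hne hu hw
    obtain ⟨c, hcab, hc⟩ := hT.isAcyclic.exists_coloring_of_adj hab
    exact ⟨c, majStep_eq_self_of_forall_adj_of_ne ha hb hc, fun h => hcab (h a b)⟩
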